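/- arXiv:1802.06968 — 2 statements merged into one kernel-verified Lean document; each statement's English description precedes it below -/
import Mathlib

section
/- Let p > 3 be a prime, r = (p²−1)/2, let α ∈ ℝ be the positive real r-th root of p, and let ζ = e^{2πi/(p+1)} ∈ ℂ be a primitive (p+1)-th root of unity. Let K = ℚ(α, ζ) ⊆ ℂ. Then the degree of K over ℚ equals φ(p+1)·(p²−1)/2. -/
/-!
`ℚ(ζ)` has degree `φ(p+1)` over `ℚ`, so it suffices that `X ^ r - p` stays irreducible over `ℚ(ζ)`.
Since `p ∤ p + 1`, the prime `p` is unramified in `ℚ(ζ)`; hence `±p` is not a `k`-th power there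
for `k ≥ 2`, because `b ^ k = ±p` would give `(p) = (b) ^ k`, making every ramification index
above `p` divisible by `k`. Irreducibility then follows from a Capelli-type criterion: `X ^ n - a`
is irreducible once neither `a` nor `-a` is a `q`-th power for any prime `q ∣ n`. This is proved by
induction on `n`, adjoining a `q`-th root `x` of `a` and noting that the norms of `±x` are `±a`.
-/

open NumberField IntermediateField Polynomial

theorem X_pow_sub_C_irreducible_of_forall_pow_ne {K : Type*} [Field K] {n : ℕ} (hn : n ≠ 0)
    {a : K} (ha : ∀ q : ℕ, q.Prime → q ∣ n → ∀ b : K, b ^ q ≠ a ∧ b ^ q ≠ -a) :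
    Irreducible (X ^ n - C a) := by
  induction n using induction_on_primes generalizing K a with
  | zero => simp at hn
  | one => simpa using irreducible_X_sub_C a
  | prime_mul p n hp IH =>
    rw [mul_comm]
    apply X_pow_mul_sub_C_irreducible
      (X_pow_sub_C_irreducible_of_prime hp fun b ↦ (ha p hp (dvd_mul_right p n) b).1)
    intro E _ _ x hx
    have hx_int : IsIntegral K x := by
      refine ⟨X ^ p - C a, monic_X_pow_sub_C a hp.ne_zero, ?_⟩
      rw [← hx]; exact minpoly.aeval K x
    have hnorm_gen : Algebra.norm K (AdjoinSimple.gen K x) = -((-1) ^ p * a) := by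
      have h := Algebra.PowerBasis.norm_gen_eq_coeff_zero_minpoly (adjoin.powerBasis hx_int)
      rw [adjoin.powerBasis_gen, adjoin.powerBasis_dim, minpoly_gen, hx,
        natDegree_X_pow_sub_C] at h
      simp [h, hp.ne_zero.symm]
    have hnorm_neg_gen : Algebra.norm K (-AdjoinSimple.gen K x) = -a := by
      rw [neg_eq_neg_one_mul, ← map_one (algebraMap K _), ← map_neg, map_mul,
        Algebra.norm_algebraMap, adjoin.finrank hx_int, hx, natDegree_X_pow_sub_C, hnorm_gen,
        mul_neg, ← mul_assoc, ← mul_pow, neg_one_mul, neg_neg, one_pow, one_mul]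
    have hq_dvd q (hqn : q ∣ n) : q ∣ p * n := dvd_mul_of_dvd_right hqn p
    refine IH (right_ne_zero_of_mul hn) fun q hq hqn b ↦ ⟨fun hb ↦ ?_, fun hb ↦ ?_⟩
    · have hb' := congrArg (Algebra.norm K) hb
      rw [map_pow, hnorm_gen] at hb'
      rcases neg_one_pow_eq_or K p with h | h <;> rw [h] at hb'
      · exact (ha q hq (hq_dvd q hqn) _).2 (by simpa using hb')
      · exact (ha q hq (hq_dvd q hqn) _).1 (by simpa using hb')
    · have hb' := congrArg (Algebra.norm K) hb
      rw [map_pow] at hb'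
      exact (ha q hq (hq_dvd q hqn) _).2 (hb'.trans hnorm_neg_gen)

theorem IntermediateField.finrank_adjoin_of_irreducible_X_pow_sub_C {F E : Type*} [Field F]
    [Field E] [Algebra F E] {n : ℕ} {a : F} (H : Irreducible (X ^ n - C a)) {α : E}
    (hα : α ^ n = algebraMap F E a) : Module.finrank F F⟮α⟯ = n := by
  have hn : n ≠ 0 := by
    rintro rfl
    rw [pow_zero, ← C_1, ← C_sub] at H
    exact not_irreducible_C _ H
  have hroot : aeval α (X ^ n - C a) = 0 := by simp [hα]
  rw [adjoin.finrank ⟨_, monic_X_pow_sub_C a hn, hroot⟩,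
    ← minpoly.eq_of_irreducible_of_monic H hroot (monic_X_pow_sub_C a hn), natDegree_X_pow_sub_C]

theorem IsPrimitiveRoot.isCyclotomicExtension_adjoin (K : Type*) {L : Type*} [Field K] [Field L]
    [Algebra K L] {n : ℕ} [NeZero n] {ζ : L} (hζ : IsPrimitiveRoot ζ n) :
    IsCyclotomicExtension {n} K K⟮ζ⟯ := by
  change IsCyclotomicExtension {n} K K⟮ζ⟯.toSubalgebra
  rw [adjoin_simple_toSubalgebra_of_isAlgebraic
    ((hζ.isIntegral (NeZero.pos n)).tower_top (A := K)).isAlgebraic]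
  exact hζ.adjoin_isCyclotomicExtension K

theorem Ideal.dvd_ramificationIdx_of_map_eq_pow {R S : Type*} [CommRing R] [CommRing S]
    [IsDedekindDomain S] [Algebra R S] {p : Ideal R} (P : Ideal S) [P.LiesOver p] {I : Ideal S}
    {k : ℕ} (h : p.map (algebraMap R S) = I ^ k) (hp : p.map (algebraMap R S) ≠ ⊥) :
    k ∣ P.ramificationIdx R := by
  rw [Ideal.IsDedekindDomain.ramificationIdx_eq_normalizedFactors_count p P hp, h,
    UniqueFactorizationMonoid.normalizedFactors_pow, Multiset.count_nsmul]
  exact dvd_mul_right _ _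

theorem IsCyclotomicExtension.Rat.pow_ne_natCast_of_not_dvd {m : ℕ} [NeZero m] {K : Type*}
    [Field K] [NumberField K] [IsCyclotomicExtension {m} ℚ K] {p : ℕ} [hp : Fact p.Prime]
    (hm : ¬ p ∣ m) {k : ℕ} (hk : 1 < k) (b : K) : b ^ k ≠ p ∧ b ^ k ≠ -p := by
  suffices ∀ ε : ℤ, IsUnit ε → b ^ k ≠ ε * p from
    ⟨by simpa using this 1 isUnit_one, by simpa using this (-1) isUnit_one.neg⟩
  intro ε hε hb
  have hb_int : IsIntegral ℤ b := by
    refine .of_pow (by omega : 0 < k) ?_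
    have : IsIntegral ℤ (algebraMap ℤ K (ε * p)) := isIntegral_algebraMap
    rw [hb]; simpa using this
  set B : 𝓞 K := ⟨b, hb_int⟩
  have hB : B ^ k = ε * p := RingOfIntegers.ext <| by
    simp only [map_pow, map_mul, map_intCast, map_natCast]; exact hb
  have hmap : (Ideal.span {(p : ℤ)}).map (algebraMap ℤ (𝓞 K)) = Ideal.span {B} ^ k := by
    rw [Ideal.map_span, Set.image_singleton, Ideal.span_singleton_pow, hB, map_natCast,
      Ideal.span_singleton_mul_left_unit]
    exact hε.map (Int.castRingHom (𝓞 K))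
  have hmap_ne : (Ideal.span {(p : ℤ)}).map (algebraMap ℤ (𝓞 K)) ≠ ⊥ := by
    simp [Ideal.map_span, hp.out.ne_zero]
  obtain ⟨⟨P, _, _⟩⟩ := (Ideal.span {(p : ℤ)}).nonempty_primesOver (S := 𝓞 K)
  have hk_dvd := Ideal.dvd_ramificationIdx_of_map_eq_pow P hmap hmap_ne
  rw [ramificationIdx_eq_of_not_dvd p K P hm, Nat.dvd_one] at hk_dvd
  omega

/-- The number field `K = ℚ(p^{2/(p²−1)}, ζ_{p+1}) ⊆ ℂ` has degree `φ(p+1)·(p²−1)/2` over `ℚ`. -/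
theorem stmt2 (p : ℕ) (hp : p.Prime) (hp3 : 3 < p) (r : ℕ) (hr : r = (p ^ 2 - 1) / 2)
    (α : ℝ) (hα : α = (p : ℝ) ^ ((r : ℝ)⁻¹))
    (ζ : ℂ) (hζ : ζ = Complex.exp (2 * Real.pi * Complex.I / (p + 1))) :
    2 * Module.finrank ℚ ℚ⟮(α : ℂ), ζ⟯ = Nat.totient (p + 1) * (p ^ 2 - 1) := by
  have : Fact p.Prime := ⟨hp⟩
  have h2r : 2 * r = p ^ 2 - 1 := hr ▸ Nat.two_mul_div_two_of_even
    (Nat.Odd.sub_odd (hp.odd_of_ne_two (by omega)).pow odd_one)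
  have hr0 : r ≠ 0 := by
    have := Nat.pow_le_pow_left hp.two_le 2
    omega
  have hζ_prim : IsPrimitiveRoot ζ (p + 1) := by
    rw [hζ]; exact_mod_cast Complex.isPrimitiveRoot_exp (p + 1) (by omega)
  have hα_pow : (α : ℂ) ^ r = p := by
    rw [← Complex.ofReal_pow, hα, Real.rpow_inv_natCast_pow (by positivity) hr0,
      Complex.ofReal_natCast]
  -- the ascription moves to the `Algebra ℚ` instance of a field of characteristic zero
  have : IsCyclotomicExtension {p + 1} ℚ ℚ⟮ζ⟯ := hζ_prim.isCyclotomicExtension_adjoin ℚ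
  have : NumberField ℚ⟮ζ⟯ := IsCyclotomicExtension.numberField {p + 1} ℚ _
  have hp_not_dvd : ¬ p ∣ p + 1 := by
    rw [Nat.dvd_add_right dvd_rfl]; exact hp.not_dvd_one
  have hirr : Irreducible (X ^ r - C (p : ℚ⟮ζ⟯)) :=
    X_pow_sub_C_irreducible_of_forall_pow_ne hr0 fun q hq _ b ↦
      IsCyclotomicExtension.Rat.pow_ne_natCast_of_not_dvd hp_not_dvd hq.one_lt b
  have hkummer : Module.finrank ℚ⟮ζ⟯ ℚ⟮ζ⟯⟮(α : ℂ)⟯ = r :=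
    finrank_adjoin_of_irreducible_X_pow_sub_C hirr (by rw [map_natCast, hα_pow])
  have htower : Module.finrank ℚ ℚ⟮ζ, (α : ℂ)⟯ =
      Module.finrank ℚ ℚ⟮ζ⟯ * Module.finrank ℚ⟮ζ⟯ ℚ⟮ζ⟯⟮(α : ℂ)⟯ := by
    rw [← adjoin_simple_adjoin_simple]
    exact (Module.finrank_mul_finrank ℚ ℚ⟮ζ⟯ ℚ⟮ζ⟯⟮(α : ℂ)⟯).symm
  rw [Set.pair_comm, htower, IsCyclotomicExtension.Rat.finrank (p + 1) ℚ⟮ζ⟯, hkummer, ← h2r]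
  ring
end

section
/- Let k ≥ 2 be an integer, p = 12k+1, g = 12k² − 3k − 1, and x = −(k−2)/k ∈ ℚ. With the index set I, intersection matrix M: I×I → ℤ, genus function γ: I → ℤ, and vector v₀: I → ℚ defined in the context, for every W ∈ I one has the identity (2γ(W) − 2) − M(W,W) − (2g−2)·δ_{W,c₀} + Σ_{V∈I} M(W,V)·v₀(V) = 0, where δ_{W,c₀} = 1 if W = c₀ and 0 otherwise. (Equivalently, the divisor D_{0,p} = 𝒦 − (2g−2)H₀ + V_{0,p} on the minimal regular model of X₀(p²) is orthogonal to all vertical divisors supported on a special fiber; the analogous identity with v_∞ in place of v₀ and c_∞ in place of c₀ also holds.) -/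
/-- The index set of the irreducible components of a special fiber of the minimal regular
model of `X₀(p²)` for `p = 12k+1`: the components `C̃₀, C̃_∞, C̃¹₁,₁, C̃²₁,₁`, the lines
`L̃ᵢ` (`1 ≤ i ≤ k`) and the chains `A_{l,i}`, `B_{l,i}` (`1 ≤ l ≤ 6k−1`, `1 ≤ i ≤ k`);
`a l i` encodes `A_{l+1,i}` and `b l i` encodes `B_{l+1,i}`. -/
inductive Idx (k : ℕ) where
  | c0 : Idx k
  | cinf : Idx k
  | d1 : Idx k
  | d2 : Idx k
  | ell : Fin k → Idx k
  | a : Fin (6 * k - 1) → Fin k → Idx k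
  | b : Fin (6 * k - 1) → Fin k → Idx k
  deriving DecidableEq, Fintype

/-- The intersection matrix of the components of the special fiber. -/
def interMat (k : ℕ) : Idx k → Idx k → ℤ
  | .c0, .c0 => -(k : ℤ)
  | .cinf, .cinf => -(k : ℤ)
  | .d1, .d1 => -(k : ℤ)
  | .d2, .d2 => -(k : ℤ)
  | .ell i, .ell j => if i = j then -4 else 0
  | .a l i, .a l' i' =>
      if i = i' then
        (if l = l' then -2 else if l.val + 1 = l'.val ∨ l'.val + 1 = l.val then 1 else 0)
      else 0
  | .b l i, .b l' i' =>
      if i = i' then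
        (if l = l' then -2 else if l.val + 1 = l'.val ∨ l'.val + 1 = l.val then 1 else 0)
      else 0
  | .c0, .a l _ => if l.val = 0 then 1 else 0
  | .a l _, .c0 => if l.val = 0 then 1 else 0
  | .cinf, .b l _ => if l.val = 0 then 1 else 0
  | .b l _, .cinf => if l.val = 0 then 1 else 0
  | .a l i, .ell j => if i = j ∧ l.val = 6 * k - 2 then 1 else 0
  | .ell j, .a l i => if i = j ∧ l.val = 6 * k - 2 then 1 else 0
  | .b l i, .ell j => if i = j ∧ l.val = 6 * k - 2 then 1 else 0
  | .ell j, .b l i => if i = j ∧ l.val = 6 * k - 2 then 1 else 0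
  | .ell _, .d1 => 1
  | .d1, .ell _ => 1
  | .ell _, .d2 => 1
  | .d2, .ell _ => 1
  | _, _ => 0

/-- The geometric genus of each component. -/
def genusFun (k : ℕ) : Idx k → ℤ
  | .d1 => 3 * (k : ℤ) ^ 2 - 3 * k + 1
  | .d2 => 3 * (k : ℤ) ^ 2 - 3 * k + 1
  | .ell _ => 6 * (k : ℤ)
  | _ => 0

/-- The genus `g = 12k² − 3k − 1` of `X₀(p²)` for `p = 12k+1`, as a rational number. -/
def gQ (k : ℕ) : ℚ := 12 * (k : ℚ) ^ 2 - 3 * k - 1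

/-- The rational number `x = −(k−2)/k`. -/
def xQ (k : ℕ) : ℚ := -((k : ℚ) - 2) / k

/-- The coefficient vector of the vertical divisor `V_{0,p}(𝔭ᵢ)`. -/
def v0 (k : ℕ) : Idx k → ℚ
  | .c0 => 12 - 12 * gQ k
  | .cinf => 0
  | .d1 => 7
  | .d2 => 7
  | .ell _ => 6 * (k : ℚ) * xQ k
  | .a l _ => (l.val + 1 : ℚ) * xQ k +
      ((12 * (k : ℚ) - 2 * (l.val + 1)) / (12 * k)) * (12 - 12 * gQ k)
  | .b l _ => (l.val + 1 : ℚ) * xQ k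

/-- The coefficient vector of the vertical divisor `V_{∞,p}(𝔭ᵢ)`. -/
def vinf (k : ℕ) : Idx k → ℚ
  | .cinf => 12 - 12 * gQ k
  | .c0 => 0
  | .d1 => 7
  | .d2 => 7
  | .ell _ => 6 * (k : ℚ) * xQ k
  | .b l _ => (l.val + 1 : ℚ) * xQ k +
      ((12 * (k : ℚ) - 2 * (l.val + 1)) / (12 * k)) * (12 - 12 * gQ k)
  | .a l _ => (l.val + 1 : ℚ) * xQ k


section Helpers

variable {k : ℕ}

/-- Equivalence of `Idx k` with a sum type, to decompose sums. -/
def idxEquiv (k : ℕ) :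
    Idx k ≃ (Unit ⊕ Unit ⊕ Unit ⊕ Unit ⊕ Fin k ⊕ (Fin (6*k-1) × Fin k) ⊕ (Fin (6*k-1) × Fin k)) where
  toFun x := match x with
    | .c0 => .inl ()
    | .cinf => .inr (.inl ())
    | .d1 => .inr (.inr (.inl ()))
    | .d2 => .inr (.inr (.inr (.inl ())))
    | .ell i => .inr (.inr (.inr (.inr (.inl i))))
    | .a l i => .inr (.inr (.inr (.inr (.inr (.inl (l, i))))))
    | .b l i => .inr (.inr (.inr (.inr (.inr (.inr (l, i))))))
  invFun x := match x with
    | .inl _ => .c0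
    | .inr (.inl _) => .cinf
    | .inr (.inr (.inl _)) => .d1
    | .inr (.inr (.inr (.inl _))) => .d2
    | .inr (.inr (.inr (.inr (.inl i)))) => .ell i
    | .inr (.inr (.inr (.inr (.inr (.inl ⟨l, i⟩))))) => .a l i
    | .inr (.inr (.inr (.inr (.inr (.inr ⟨l, i⟩))))) => .b l i
  left_inv x := by cases x <;> rfl
  right_inv x := by
    rcases x with _ | _ | _ | _ | _ | ⟨l, i⟩ | ⟨l, i⟩ <;> rfl

lemma sum_idx (f : Idx k → ℚ) :
    ∑ V : Idx k, f V =
      f .c0 + f .cinf + f .d1 + f .d2 + (∑ i, f (.ell i)) +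
      (∑ l, ∑ i, f (.a l i)) + (∑ l, ∑ i, f (.b l i)) := by
  rw [← Equiv.sum_comp (idxEquiv k).symm f]
  simp only [Fintype.sum_sum_type, Fintype.sum_prod_type, Finset.univ_unique,
    Finset.sum_singleton]
  simp only [idxEquiv, Equiv.coe_fn_symm_mk]
  ring

lemma sum_if_val {n m : ℕ} (f : Fin n → ℚ) :
    ∑ l : Fin n, (if l.val = m then f l else 0) = if h : m < n then f ⟨m, h⟩ else 0 := by
  split
  · next h =>
    rw [Finset.sum_eq_single (⟨m, h⟩ : Fin n)]
    · simp
    · intro b _ hb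
      rw [if_neg]
      intro hv
      exact hb (Fin.ext hv)
    · simp
  · next h =>
    apply Finset.sum_eq_zero
    intro l _
    rw [if_neg]
    intro hv
    exact h (hv ▸ l.isLt)

lemma tri_sum {n : ℕ} (l : Fin n) (f : Fin n → ℚ) :
    ∑ l' : Fin n,
      (if l = l' then (-2 : ℚ) else if l.val + 1 = l'.val ∨ l'.val + 1 = l.val then 1 else 0)
        * f l' =
      -2 * f l
      + (if h : l.val + 1 < n then f ⟨l.val + 1, h⟩ else 0)
      + (if 1 ≤ l.val then f ⟨l.val - 1, Nat.lt_of_le_of_lt (Nat.sub_le _ _) l.isLt⟩ else 0) := by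
  have key : ∀ l' : Fin n,
      (if l = l' then (-2 : ℚ) else if l.val + 1 = l'.val ∨ l'.val + 1 = l.val then 1 else 0)
        * f l'
      = (if l = l' then -2 * f l' else 0)
        + (if l'.val = l.val + 1 then f l' else 0)
        + (if 1 ≤ l.val ∧ l'.val = l.val - 1 then f l' else 0) := by
    intro l'
    simp only [Fin.ext_iff]
    split_ifs <;> first | ring1 | (exfalso; omega)
  rw [Finset.sum_congr rfl fun l' _ => key l', Finset.sum_add_distrib, Finset.sum_add_distrib]
  have h1 : ∑ l' : Fin n, (if l = l' then -2 * f l' else 0) = -2 * f l := by simp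
  have h2 : ∑ l' : Fin n, (if l'.val = l.val + 1 then f l' else 0)
      = if h : l.val + 1 < n then f ⟨l.val + 1, h⟩ else 0 := sum_if_val f
  have h3 : ∑ l' : Fin n, (if 1 ≤ l.val ∧ l'.val = l.val - 1 then f l' else 0)
      = if 1 ≤ l.val then f ⟨l.val - 1, Nat.lt_of_le_of_lt (Nat.sub_le _ _) l.isLt⟩ else 0 := by
    by_cases hl : 1 ≤ l.val
    · simp only [hl, true_and, if_true]
      rw [sum_if_val f, dif_pos (Nat.lt_of_le_of_lt (Nat.sub_le _ _) l.isLt)]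
    · simp [hl]
  rw [h1, h2, h3]

/-- The swap involution exchanging `c0 ↔ cinf` and `a ↔ b`. -/
def swapIdx : Idx k → Idx k
  | .c0 => .cinf
  | .cinf => .c0
  | .d1 => .d1
  | .d2 => .d2
  | .ell i => .ell i
  | .a l i => .b l i
  | .b l i => .a l i

lemma swapIdx_invol : Function.Involutive (swapIdx (k := k)) := by
  intro x; cases x <;> rfl

lemma interMat_swap (W V : Idx k) :
    interMat k (swapIdx W) (swapIdx V) = interMat k W V := by
  cases W <;> cases V <;> rfl

lemma genusFun_swap (W : Idx k) : genusFun k (swapIdx W) = genusFun k W := by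
  cases W <;> rfl

lemma v0_swap (V : Idx k) : v0 k (swapIdx V) = vinf k V := by
  cases V <;> rfl

end Helpers


section Rows

variable {k : ℕ} (l l' : Fin (6 * k - 1)) (i i' j : Fin k)

-- ℚ-valued entries of the intersection matrix, row by row.
@[simp] lemma row_c0_c0 : ((interMat k .c0 .c0 : ℤ) : ℚ) = -(k : ℚ) := by
  show ((-(k:ℤ) : ℤ) : ℚ) = _; push_cast; ring
@[simp] lemma row_c0_cinf : ((interMat k .c0 .cinf : ℤ) : ℚ) = 0 := rfl
@[simp] lemma row_c0_d1 : ((interMat k .c0 .d1 : ℤ) : ℚ) = 0 := rfl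
@[simp] lemma row_c0_d2 : ((interMat k .c0 .d2 : ℤ) : ℚ) = 0 := rfl
@[simp] lemma row_c0_ell : ((interMat k .c0 (.ell j) : ℤ) : ℚ) = 0 := rfl
@[simp] lemma row_c0_a : ((interMat k .c0 (.a l i) : ℤ) : ℚ) = if l.val = 0 then 1 else 0 := by
  show (((if l.val = 0 then 1 else 0 : ℤ)) : ℚ) = _; split_ifs <;> simp
@[simp] lemma row_c0_b : ((interMat k .c0 (.b l i) : ℤ) : ℚ) = 0 := rfl

@[simp] lemma row_cinf_c0 : ((interMat k .cinf .c0 : ℤ) : ℚ) = 0 := rfl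
@[simp] lemma row_cinf_cinf : ((interMat k .cinf .cinf : ℤ) : ℚ) = -(k : ℚ) := by
  show ((-(k:ℤ) : ℤ) : ℚ) = _; push_cast; ring
@[simp] lemma row_cinf_d1 : ((interMat k .cinf .d1 : ℤ) : ℚ) = 0 := rfl
@[simp] lemma row_cinf_d2 : ((interMat k .cinf .d2 : ℤ) : ℚ) = 0 := rfl
@[simp] lemma row_cinf_ell : ((interMat k .cinf (.ell j) : ℤ) : ℚ) = 0 := rfl
@[simp] lemma row_cinf_a : ((interMat k .cinf (.a l i) : ℤ) : ℚ) = 0 := rfl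
@[simp] lemma row_cinf_b : ((interMat k .cinf (.b l i) : ℤ) : ℚ) = if l.val = 0 then 1 else 0 := by
  show (((if l.val = 0 then 1 else 0 : ℤ)) : ℚ) = _; split_ifs <;> simp

@[simp] lemma row_d1_c0 : ((interMat k .d1 .c0 : ℤ) : ℚ) = 0 := rfl
@[simp] lemma row_d1_cinf : ((interMat k .d1 .cinf : ℤ) : ℚ) = 0 := rfl
@[simp] lemma row_d1_d1 : ((interMat k .d1 .d1 : ℤ) : ℚ) = -(k : ℚ) := by
  show ((-(k:ℤ) : ℤ) : ℚ) = _; push_cast; ring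
@[simp] lemma row_d1_d2 : ((interMat k .d1 .d2 : ℤ) : ℚ) = 0 := rfl
@[simp] lemma row_d1_ell : ((interMat k .d1 (.ell j) : ℤ) : ℚ) = 1 := rfl
@[simp] lemma row_d1_a : ((interMat k .d1 (.a l i) : ℤ) : ℚ) = 0 := rfl
@[simp] lemma row_d1_b : ((interMat k .d1 (.b l i) : ℤ) : ℚ) = 0 := rfl

@[simp] lemma row_d2_c0 : ((interMat k .d2 .c0 : ℤ) : ℚ) = 0 := rfl
@[simp] lemma row_d2_cinf : ((interMat k .d2 .cinf : ℤ) : ℚ) = 0 := rfl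
@[simp] lemma row_d2_d1 : ((interMat k .d2 .d1 : ℤ) : ℚ) = 0 := rfl
@[simp] lemma row_d2_d2 : ((interMat k .d2 .d2 : ℤ) : ℚ) = -(k : ℚ) := by
  show ((-(k:ℤ) : ℤ) : ℚ) = _; push_cast; ring
@[simp] lemma row_d2_ell : ((interMat k .d2 (.ell j) : ℤ) : ℚ) = 1 := rfl
@[simp] lemma row_d2_a : ((interMat k .d2 (.a l i) : ℤ) : ℚ) = 0 := rfl
@[simp] lemma row_d2_b : ((interMat k .d2 (.b l i) : ℤ) : ℚ) = 0 := rfl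

@[simp] lemma row_ell_c0 : ((interMat k (.ell j) .c0 : ℤ) : ℚ) = 0 := rfl
@[simp] lemma row_ell_cinf : ((interMat k (.ell j) .cinf : ℤ) : ℚ) = 0 := rfl
@[simp] lemma row_ell_d1 : ((interMat k (.ell j) .d1 : ℤ) : ℚ) = 1 := rfl
@[simp] lemma row_ell_d2 : ((interMat k (.ell j) .d2 : ℤ) : ℚ) = 1 := rfl
@[simp] lemma row_ell_ell : ((interMat k (.ell j) (.ell i) : ℤ) : ℚ) = if j = i then -4 else 0 := by
  show (((if j = i then -4 else 0 : ℤ)) : ℚ) = _; split_ifs <;> simp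
@[simp] lemma row_ell_a : ((interMat k (.ell j) (.a l i) : ℤ) : ℚ)
    = if i = j ∧ l.val = 6 * k - 2 then 1 else 0 := by
  show (((if i = j ∧ l.val = 6 * k - 2 then 1 else 0 : ℤ)) : ℚ) = _; split_ifs <;> simp
@[simp] lemma row_ell_b : ((interMat k (.ell j) (.b l i) : ℤ) : ℚ)
    = if i = j ∧ l.val = 6 * k - 2 then 1 else 0 := by
  show (((if i = j ∧ l.val = 6 * k - 2 then 1 else 0 : ℤ)) : ℚ) = _; split_ifs <;> simp

@[simp] lemma row_a_c0 : ((interMat k (.a l i) .c0 : ℤ) : ℚ) = if l.val = 0 then 1 else 0 := by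
  show (((if l.val = 0 then 1 else 0 : ℤ)) : ℚ) = _; split_ifs <;> simp
@[simp] lemma row_a_cinf : ((interMat k (.a l i) .cinf : ℤ) : ℚ) = 0 := rfl
@[simp] lemma row_a_d1 : ((interMat k (.a l i) .d1 : ℤ) : ℚ) = 0 := rfl
@[simp] lemma row_a_d2 : ((interMat k (.a l i) .d2 : ℤ) : ℚ) = 0 := rfl
@[simp] lemma row_a_ell : ((interMat k (.a l i) (.ell j) : ℤ) : ℚ)
    = if i = j ∧ l.val = 6 * k - 2 then 1 else 0 := by
  show (((if i = j ∧ l.val = 6 * k - 2 then 1 else 0 : ℤ)) : ℚ) = _; split_ifs <;> simp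
@[simp] lemma row_a_a : ((interMat k (.a l i) (.a l' i') : ℤ) : ℚ)
    = if i = i' then
        (if l = l' then (-2 : ℚ) else if l.val + 1 = l'.val ∨ l'.val + 1 = l.val then 1 else 0)
      else 0 := by
  show (((if i = i' then
      (if l = l' then -2 else if l.val + 1 = l'.val ∨ l'.val + 1 = l.val then 1 else 0)
    else 0 : ℤ)) : ℚ) = _
  split_ifs <;> simp
@[simp] lemma row_a_b : ((interMat k (.a l i) (.b l' i') : ℤ) : ℚ) = 0 := rfl

@[simp] lemma row_b_c0 : ((interMat k (.b l i) .c0 : ℤ) : ℚ) = 0 := rfl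
@[simp] lemma row_b_cinf : ((interMat k (.b l i) .cinf : ℤ) : ℚ) = if l.val = 0 then 1 else 0 := by
  show (((if l.val = 0 then 1 else 0 : ℤ)) : ℚ) = _; split_ifs <;> simp
@[simp] lemma row_b_d1 : ((interMat k (.b l i) .d1 : ℤ) : ℚ) = 0 := rfl
@[simp] lemma row_b_d2 : ((interMat k (.b l i) .d2 : ℤ) : ℚ) = 0 := rfl
@[simp] lemma row_b_ell : ((interMat k (.b l i) (.ell j) : ℤ) : ℚ)
    = if i = j ∧ l.val = 6 * k - 2 then 1 else 0 := by
  show (((if i = j ∧ l.val = 6 * k - 2 then 1 else 0 : ℤ)) : ℚ) = _; split_ifs <;> simp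
@[simp] lemma row_b_b : ((interMat k (.b l i) (.b l' i') : ℤ) : ℚ)
    = if i = i' then
        (if l = l' then (-2 : ℚ) else if l.val + 1 = l'.val ∨ l'.val + 1 = l.val then 1 else 0)
      else 0 := by
  show (((if i = i' then
      (if l = l' then -2 else if l.val + 1 = l'.val ∨ l'.val + 1 = l.val then 1 else 0)
    else 0 : ℤ)) : ℚ) = _
  split_ifs <;> simp
@[simp] lemma row_b_a : ((interMat k (.b l i) (.a l' i') : ℤ) : ℚ) = 0 := rfl

end Rows


section Collapse

variable {m : ℕ}

lemma collapse1 (i : Fin m) (T : ℚ) (v : Fin m → ℚ) :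
    ∑ i' : Fin m, (if i = i' then T else 0) * v i' = T * v i := by
  simp [ite_mul, Finset.sum_ite_eq]

lemma collapse2 (i : Fin m) (T : ℚ) (v : Fin m → ℚ) :
    ∑ i' : Fin m, (if i' = i then T else 0) * v i' = T * v i := by
  simp [ite_mul, Finset.sum_ite_eq']

lemma collapse_and1 (i : Fin m) (P : Prop) [Decidable P] (T : ℚ) (v : Fin m → ℚ) :
    ∑ i' : Fin m, (if i = i' ∧ P then T else 0) * v i' = if P then T * v i else 0 := by
  by_cases hP : P <;> simp [hP, ite_mul, Finset.sum_ite_eq]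

lemma collapse_and2 (i : Fin m) (P : Prop) [Decidable P] (T : ℚ) (v : Fin m → ℚ) :
    ∑ i' : Fin m, (if i' = i ∧ P then T else 0) * v i' = if P then T * v i else 0 := by
  by_cases hP : P <;> simp [hP, ite_mul, Finset.sum_ite_eq']

end Collapse

/-- Proposition 3.1 of the paper for `p ≡ 1 (mod 12)`: the divisors
`D_{m,p} = 𝒦 − (2g−2)H_m + V_{m,p}` (`m = 0, ∞`) are orthogonal to all vertical divisors. -/
theorem stmt16 (k : ℕ) (hk : 2 ≤ k) (p : ℕ) (hp : p = 12 * k + 1) :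
    (∀ W : Idx k,
      ((2 * genusFun k W - 2 : ℤ) : ℚ) - ((interMat k W W : ℤ) : ℚ) -
        (2 * gQ k - 2) * (if W = Idx.c0 then 1 else 0) +
        ∑ V : Idx k, ((interMat k W V : ℤ) : ℚ) * v0 k V = 0) ∧
    (∀ W : Idx k,
      ((2 * genusFun k W - 2 : ℤ) : ℚ) - ((interMat k W W : ℤ) : ℚ) -
        (2 * gQ k - 2) * (if W = Idx.cinf then 1 else 0) +
        ∑ V : Idx k, ((interMat k W V : ℤ) : ℚ) * vinf k V = 0) := by
  have hk0 : (k : ℚ) ≠ 0 := Nat.cast_ne_zero.mpr (by omega)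
  have hn0 : 0 < 6 * k - 1 := by omega
  have h62 : ((6 * k - 2 : ℕ) : ℚ) = 6 * (k : ℚ) - 2 := by
    rw [Nat.cast_sub (by omega : 2 ≤ 6 * k)]; push_cast; ring
  have main : ∀ W : Idx k,
      ((2 * genusFun k W - 2 : ℤ) : ℚ) - ((interMat k W W : ℤ) : ℚ) -
        (2 * gQ k - 2) * (if W = Idx.c0 then 1 else 0) +
        ∑ V : Idx k, ((interMat k W V : ℤ) : ℚ) * v0 k V = 0 := by
    intro W
    cases W with
    | c0 =>
      rw [sum_idx (fun V => ((interMat k Idx.c0 V : ℤ) : ℚ) * v0 k V)]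
      simp only [row_c0_c0, row_c0_cinf, row_c0_d1, row_c0_d2, row_c0_ell, row_c0_a, row_c0_b,
        zero_mul, Finset.sum_const_zero, add_zero, v0, genusFun, ite_mul, one_mul,
        Finset.sum_const, Finset.card_univ, Fintype.card_fin, nsmul_eq_mul, mul_ite, mul_zero]
      rw [sum_if_val, dif_pos hn0]
      simp only [if_pos rfl, gQ, xQ, Fin.val_mk]
      push_cast
      field_simp
      try ring
    | cinf =>
      rw [sum_idx (fun V => ((interMat k Idx.cinf V : ℤ) : ℚ) * v0 k V)]
      simp only [row_cinf_c0, row_cinf_cinf, row_cinf_d1, row_cinf_d2, row_cinf_ell, row_cinf_a,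
        row_cinf_b, zero_mul, Finset.sum_const_zero, add_zero, v0, genusFun, ite_mul, one_mul,
        Finset.sum_const, Finset.card_univ, Fintype.card_fin, nsmul_eq_mul, mul_ite, mul_zero]
      rw [sum_if_val, dif_pos hn0]
      simp only [gQ, xQ, Fin.val_mk, reduceCtorEq, if_false]
      push_cast
      field_simp
      try ring
    | d1 =>
      rw [sum_idx (fun V => ((interMat k Idx.d1 V : ℤ) : ℚ) * v0 k V)]
      simp only [row_d1_c0, row_d1_cinf, row_d1_d1, row_d1_d2, row_d1_ell, row_d1_a, row_d1_b,
        zero_mul, Finset.sum_const_zero, add_zero, zero_add, v0, genusFun, one_mul,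
        Finset.sum_const, Finset.card_univ, Fintype.card_fin, nsmul_eq_mul]
      simp only [gQ, xQ, reduceCtorEq, if_false]
      push_cast
      field_simp
      try ring
    | d2 =>
      rw [sum_idx (fun V => ((interMat k Idx.d2 V : ℤ) : ℚ) * v0 k V)]
      simp only [row_d2_c0, row_d2_cinf, row_d2_d1, row_d2_d2, row_d2_ell, row_d2_a, row_d2_b,
        zero_mul, Finset.sum_const_zero, add_zero, zero_add, v0, genusFun, one_mul,
        Finset.sum_const, Finset.card_univ, Fintype.card_fin, nsmul_eq_mul]
      simp only [gQ, xQ, reduceCtorEq, if_false]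
      push_cast
      field_simp
      try ring
    | ell j =>
      rw [sum_idx (fun V => ((interMat k (Idx.ell j) V : ℤ) : ℚ) * v0 k V)]
      simp only [row_ell_c0, row_ell_cinf, row_ell_d1, row_ell_d2, row_ell_ell, row_ell_a,
        row_ell_b, zero_mul, Finset.sum_const_zero, add_zero, zero_add, collapse1,
        collapse_and2, eq_self_iff_true, if_true, reduceCtorEq, if_false]
      rw [sum_if_val (fun x => 1 * v0 k (.a x j)), dif_pos (by omega : 6 * k - 2 < 6 * k - 1),
        sum_if_val (fun x => 1 * v0 k (.b x j)), dif_pos (by omega : 6 * k - 2 < 6 * k - 1)]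
      simp only [v0, genusFun, Fin.val_mk, h62, one_mul, gQ, xQ, mul_zero]
      push_cast
      field_simp
      try ring
    | a l i =>
      have hlt : l.val < 6 * k - 1 := l.isLt
      rw [sum_idx (fun V => ((interMat k (Idx.a l i) V : ℤ) : ℚ) * v0 k V)]
      simp only [row_a_c0, row_a_cinf, row_a_d1, row_a_d2, row_a_ell, row_a_a, row_a_b,
        zero_mul, Finset.sum_const_zero, add_zero, zero_add, collapse_and1, collapse1,
        eq_self_iff_true, if_true, reduceCtorEq, if_false, mul_zero, genusFun]
      rw [tri_sum l (fun l' => v0 k (.a l' i))]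
      by_cases h0 : l.val = 0
      · rw [if_pos h0, if_neg (by omega : ¬ l.val = 6 * k - 2),
          dif_pos (by omega : l.val + 1 < 6 * k - 1), if_neg (by omega : ¬ 1 ≤ l.val)]
        simp only [v0, Fin.val_mk, h0, gQ, xQ]
        push_cast
        field_simp
        try ring
      · by_cases h6 : l.val = 6 * k - 2
        · rw [if_neg h0, if_pos h6, dif_neg (by omega : ¬ l.val + 1 < 6 * k - 1),
            if_pos (by omega : 1 ≤ l.val)]
          have hm1 : ((l.val - 1 : ℕ) : ℚ) = (l.val : ℚ) - 1 := by
            rw [Nat.cast_sub (by omega : 1 ≤ l.val)]; norm_num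
          have hc6 : ((l.val : ℕ) : ℚ) = 6 * (k : ℚ) - 2 := by rw [h6, h62]
          simp only [v0, Fin.val_mk, hm1, gQ, xQ]
          push_cast
          rw [hc6]
          field_simp
          try ring
        · rw [if_neg h0, if_neg h6, dif_pos (by omega : l.val + 1 < 6 * k - 1),
            if_pos (by omega : 1 ≤ l.val)]
          have hm1 : ((l.val - 1 : ℕ) : ℚ) = (l.val : ℚ) - 1 := by
            rw [Nat.cast_sub (by omega : 1 ≤ l.val)]; norm_num
          simp only [v0, Fin.val_mk, hm1, gQ, xQ]
          push_cast
          field_simp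
          try ring
    | b l i =>
      have hlt : l.val < 6 * k - 1 := l.isLt
      rw [sum_idx (fun V => ((interMat k (Idx.b l i) V : ℤ) : ℚ) * v0 k V)]
      simp only [row_b_c0, row_b_cinf, row_b_d1, row_b_d2, row_b_ell, row_b_a, row_b_b,
        zero_mul, Finset.sum_const_zero, add_zero, zero_add, collapse_and1, collapse1,
        eq_self_iff_true, if_true, reduceCtorEq, if_false, mul_zero, genusFun]
      rw [tri_sum l (fun l' => v0 k (.b l' i))]
      by_cases h0 : l.val = 0
      · rw [if_pos h0, if_neg (by omega : ¬ l.val = 6 * k - 2),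
          dif_pos (by omega : l.val + 1 < 6 * k - 1), if_neg (by omega : ¬ 1 ≤ l.val)]
        simp only [v0, Fin.val_mk, h0, gQ, xQ]
        push_cast
        field_simp
        try ring
      · by_cases h6 : l.val = 6 * k - 2
        · rw [if_neg h0, if_pos h6, dif_neg (by omega : ¬ l.val + 1 < 6 * k - 1),
            if_pos (by omega : 1 ≤ l.val)]
          have hm1 : ((l.val - 1 : ℕ) : ℚ) = (l.val : ℚ) - 1 := by
            rw [Nat.cast_sub (by omega : 1 ≤ l.val)]; norm_num
          have hc6 : ((l.val : ℕ) : ℚ) = 6 * (k : ℚ) - 2 := by rw [h6, h62]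
          simp only [v0, Fin.val_mk, hm1, gQ, xQ]
          push_cast
          rw [hc6]
          field_simp
          try ring
        · rw [if_neg h0, if_neg h6, dif_pos (by omega : l.val + 1 < 6 * k - 1),
            if_pos (by omega : 1 ≤ l.val)]
          have hm1 : ((l.val - 1 : ℕ) : ℚ) = (l.val : ℚ) - 1 := by
            rw [Nat.cast_sub (by omega : 1 ≤ l.val)]; norm_num
          simp only [v0, Fin.val_mk, hm1, gQ, xQ]
          push_cast
          field_simp
          try ring
  refine ⟨main, fun W => ?_⟩
  have h := main (swapIdx W)
  rw [genusFun_swap, interMat_swap] at h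
  have hdelta : (if swapIdx W = Idx.c0 then (1 : ℚ) else 0) = (if W = Idx.cinf then 1 else 0) := by
    cases W <;> simp [swapIdx]
  rw [hdelta] at h
  have hsum : ∑ V : Idx k, ((interMat k (swapIdx W) V : ℤ) : ℚ) * v0 k V
      = ∑ V : Idx k, ((interMat k W V : ℤ) : ℚ) * vinf k V := by
    rw [← Equiv.sum_comp (swapIdx_invol (k := k)).toPerm
      (fun V => ((interMat k (swapIdx W) V : ℤ) : ℚ) * v0 k V)]
    refine Finset.sum_congr rfl fun V _ => ?_
    simp only [Function.Involutive.coe_toPerm]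
    rw [interMat_swap, v0_swap]
  rw [hsum] at h
  exact h
end
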